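/- Suppose A and G are n×n real matrices and there exists an invertible X with ‖X⁻¹ A G X − diag(I_r, 0)‖₂ = ε < 1, where r = rank(A). Then range(A G) = range(A). -/

import Mathlib

open scoped Matrix.Norms.L2Operator

/-!
Conjugation by `X` preserves rank, so `M = X⁻¹ (A G) X` has the rank of `A G`. Since
`D = diag(I_r, 0)` is idempotent and `‖M - D‖ < 1`, `M` kills no nonzero `v = D v` (otherwise
`‖(M - D) v‖ = ‖v‖`), so `M` is injective on the range of `D` and
`rank (A G) ≥ rank D = r = rank A`. As `range (A G) ⊆ range A`, the two ranges coincide.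
-/

/-- The n×n block diagonal matrix diag(I_r, 0). -/
def diagIr (n r : ℕ) : Matrix (Fin n) (Fin n) ℝ :=
  Matrix.of fun i j => if i = j ∧ (i : ℕ) < r then (1 : ℝ) else 0

namespace Matrix

theorem range_mul_mulVecLin_eq_of_rank_le {K m n : Type*} [Field K] [Fintype m] [Fintype n]
    {A : Matrix m n K} {B : Matrix n m K} (h : A.rank ≤ (A * B).rank) :
    LinearMap.range (A * B).mulVecLin = LinearMap.range A.mulVecLin := by
  refine Submodule.eq_of_le_of_finrank_le ?_ h
  rw [mulVecLin_mul]
  exact LinearMap.range_comp_le_range _ _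

variable {𝕜 : Type*} [RCLike 𝕜] {m : Type*} [Fintype m] [DecidableEq m]

theorem eq_zero_of_mulVec_eq_zero_of_norm_sub_lt_one {M D : Matrix m m 𝕜} (h : ‖M - D‖ < 1)
    {v : m → 𝕜} (hDv : D *ᵥ v = v) (hMv : M *ᵥ v = 0) : v = 0 := by
  have hsub : (M - D) *ᵥ v = -v := by rw [sub_mulVec, hMv, hDv, zero_sub]
  have hle : ‖WithLp.toLp 2 v‖ ≤ ‖M - D‖ * ‖WithLp.toLp 2 v‖ := by
    simpa [hsub] using l2_opNorm_mulVec (M - D) (WithLp.toLp 2 v)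
  have hzero : ‖WithLp.toLp 2 v‖ = 0 := by
    nlinarith [norm_nonneg (WithLp.toLp 2 v), norm_nonneg (M - D)]
  simpa using hzero

theorem rank_le_rank_of_norm_sub_lt_one {M D : Matrix m m 𝕜} (hD : IsIdempotentElem D)
    (h : ‖M - D‖ < 1) : D.rank ≤ M.rank := by
  set V := LinearMap.range D.mulVecLin
  have hinj : Function.Injective (M.mulVecLin ∘ₗ V.subtype) := by
    rw [← LinearMap.ker_eq_bot, LinearMap.ker_eq_bot']
    rintro ⟨_, w, rfl⟩ hMv
    have hDv : D *ᵥ (D *ᵥ w) = D *ᵥ w := by rw [mulVec_mulVec, hD.eq]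
    exact Subtype.ext (eq_zero_of_mulVec_eq_zero_of_norm_sub_lt_one h hDv hMv)
  calc D.rank = Module.finrank 𝕜 (LinearMap.range (M.mulVecLin ∘ₗ V.subtype)) :=
        (LinearMap.finrank_range_of_inj hinj).symm
    _ ≤ M.rank := Submodule.finrank_mono (LinearMap.range_comp_le_range _ _)

theorem rank_conj_of_isUnit {X : Matrix m m 𝕜} (hX : IsUnit X) (M : Matrix m m 𝕜) :
    (X⁻¹ * M * X).rank = M.rank := by
  have hdet : IsUnit X.det := (isUnit_iff_isUnit_det X).mp hX
  rw [rank_mul_eq_left_of_isUnit_det _ _ hdet,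
    rank_mul_eq_right_of_isUnit_det _ _ (isUnit_nonsing_inv_det X hdet)]

end Matrix

theorem diagIr_eq_diagonal (n r : ℕ) :
    diagIr n r = Matrix.diagonal fun i : Fin n => if (i : ℕ) < r then (1 : ℝ) else 0 := by
  ext i j
  by_cases hij : i = j <;> simp [diagIr, Matrix.diagonal, hij]

theorem isIdempotentElem_diagIr (n r : ℕ) : IsIdempotentElem (diagIr n r) := by
  rw [IsIdempotentElem, diagIr_eq_diagonal, Matrix.diagonal_mul_diagonal]
  congr 1
  ext i
  split_ifs <;> norm_num

theorem rank_diagIr {n r : ℕ} (h : r ≤ n) : (diagIr n r).rank = r := by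
  rw [diagIr_eq_diagonal, Matrix.rank_diagonal]
  simpa using Fintype.card_fin_lt_of_le h

/-- If G is an ε-accurate approximate generalized inverse of A (ε < 1),
then range(A G) = range(A). -/
theorem stmt11 {n : ℕ} (A G X : Matrix (Fin n) (Fin n) ℝ) (ε : ℝ) (hX : IsUnit X)
    (hε : ‖X⁻¹ * (A * G) * X - diagIr n A.rank‖ = ε) (hε1 : ε < 1) :
    LinearMap.range (A * G).mulVecLin = LinearMap.range A.mulVecLin := by
  apply Matrix.range_mul_mulVecLin_eq_of_rank_le
  calc A.rank = (diagIr n A.rank).rank := (rank_diagIr A.rank_le_width).symm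
    _ ≤ (X⁻¹ * (A * G) * X).rank :=
      Matrix.rank_le_rank_of_norm_sub_lt_one (isIdempotentElem_diagIr n A.rank) (hε ▸ hε1)
    _ = (A * G).rank := Matrix.rank_conj_of_isUnit hX _
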